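/- arXiv:1412.2064 — 3 statements merged into one kernel-verified Lean document; each statement's English description precedes it below -/
import Mathlib

section
/- Let D ∈ ℝ^{m×m} satisfy D⁻¹ + D⁻⊤ positive definite, and let ε > 0. Then the map f(z) = (I + εD⁻¹)⁻¹ z is well-defined and is a contraction; specifically ‖f(z₁) − f(z₂)‖ ≤ (1 + ε λ_min(D⁻¹ + D⁻⊤) + ε² λ_min(D⁻⊤D⁻¹))^{−1/2} ‖z₁ − z₂‖ for all z₁, z₂. -/
open scoped Matrix

/-- Smallest eigenvalue of a symmetric matrix, via the Rayleigh quotient. -/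
noncomputable def lamMin {m : ℕ} (M : Matrix (Fin m) (Fin m) ℝ) : ℝ :=
  ⨅ v : {v : Fin m → ℝ // v ⬝ᵥ v = 1}, (v : Fin m → ℝ) ⬝ᵥ (M *ᵥ (v : Fin m → ℝ))


lemma quadform_bdd {m : ℕ} (M : Matrix (Fin m) (Fin m) ℝ) (v : Fin m → ℝ)
    (hv : v ⬝ᵥ v = 1) : |v ⬝ᵥ (M *ᵥ v)| ≤ ∑ i, ∑ j, |M i j| := by
  have habs : ∀ i, |v i| ≤ 1 := by
    intro i
    have h1 : v i ^ 2 ≤ ∑ j, v j ^ 2 := by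
      apply Finset.single_le_sum (f := fun j => v j ^ 2) (fun j _ => sq_nonneg _) (Finset.mem_univ i)
    have h2 : (∑ j, v j ^ 2) = 1 := by
      rw [← hv]; simp [dotProduct, sq]
    rw [h2] at h1
    nlinarith [abs_nonneg (v i), sq_abs (v i)]
  calc |v ⬝ᵥ (M *ᵥ v)| ≤ ∑ i, |v i * (M *ᵥ v) i| := Finset.abs_sum_le_sum_abs _ _
    _ ≤ ∑ i, ∑ j, |M i j| := by
        apply Finset.sum_le_sum
        intro i _
        rw [abs_mul]
        calc |v i| * |(M *ᵥ v) i| ≤ 1 * |(M *ᵥ v) i| := by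
              apply mul_le_mul_of_nonneg_right (habs i) (abs_nonneg _)
          _ = |∑ j, M i j * v j| := by rw [one_mul]; rfl
          _ ≤ ∑ j, |M i j * v j| := Finset.abs_sum_le_sum_abs _ _
          _ ≤ ∑ j, |M i j| := by
              apply Finset.sum_le_sum
              intro j _
              rw [abs_mul]
              calc |M i j| * |v j| ≤ |M i j| * 1 :=
                    mul_le_mul_of_nonneg_left (habs j) (abs_nonneg _)
                _ = |M i j| := mul_one _

lemma lamMin_mul_le {m : ℕ} (M : Matrix (Fin m) (Fin m) ℝ) (w : Fin m → ℝ) :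
    lamMin M * (w ⬝ᵥ w) ≤ w ⬝ᵥ (M *ᵥ w) := by
  by_cases hw : w = 0
  · simp [hw]
  · have hwpos : 0 < w ⬝ᵥ w := by
      have h2 : (∑ j, w j ^ 2) = w ⬝ᵥ w := by simp [dotProduct, sq]
      rw [← h2]
      apply Finset.sum_pos'
      · exact fun j _ => sq_nonneg _
      · obtain ⟨i, hi⟩ := Function.ne_iff.mp hw
        exact ⟨i, Finset.mem_univ i, pow_two_pos_of_ne_zero hi⟩
    set t := Real.sqrt (w ⬝ᵥ w) with ht
    have htpos : 0 < t := Real.sqrt_pos.mpr hwpos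
    have ht2 : t ^ 2 = w ⬝ᵥ w := Real.sq_sqrt hwpos.le
    set v : Fin m → ℝ := t⁻¹ • w with hvdef
    have hv : v ⬝ᵥ v = 1 := by
      rw [hvdef]
      rw [smul_dotProduct, dotProduct_smul]
      field_simp
      rw [← ht2]; simp only [smul_eq_mul]; field_simp [htpos.ne']
    have hbdd : BddBelow (Set.range fun v : {v : Fin m → ℝ // v ⬝ᵥ v = 1} =>
        (v : Fin m → ℝ) ⬝ᵥ (M *ᵥ (v : Fin m → ℝ))) := by
      refine ⟨-(∑ i, ∑ j, |M i j|), ?_⟩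
      rintro x ⟨u, rfl⟩
      have := quadform_bdd M u u.2
      linarith [abs_nonneg ((u : Fin m → ℝ) ⬝ᵥ (M *ᵥ (u : Fin m → ℝ))), neg_abs_le ((u : Fin m → ℝ) ⬝ᵥ (M *ᵥ (u : Fin m → ℝ)))]
    have hle : lamMin M ≤ v ⬝ᵥ (M *ᵥ v) := ciInf_le hbdd ⟨v, hv⟩
    have hquad : v ⬝ᵥ (M *ᵥ v) = (t⁻¹)^2 * (w ⬝ᵥ (M *ᵥ w)) := by
      simp only [hvdef, Matrix.mulVec_smul, smul_dotProduct, dotProduct_smul,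
        smul_eq_mul]
      ring
    rw [hquad] at hle
    have := mul_le_mul_of_nonneg_right hle (le_of_lt (by positivity : (0:ℝ) < t^2))
    calc lamMin M * (w ⬝ᵥ w) = lamMin M * t^2 := by rw [ht2]
      _ ≤ (t⁻¹)^2 * (w ⬝ᵥ (M *ᵥ w)) * t^2 := by linarith [mul_le_mul_of_nonneg_right hle (sq_nonneg t)]
      _ = w ⬝ᵥ (M *ᵥ w) := by field_simp

lemma lamMin_nonneg {m : ℕ} (M : Matrix (Fin m) (Fin m) ℝ)
    (h : ∀ v : Fin m → ℝ, v ⬝ᵥ v = 1 → 0 ≤ v ⬝ᵥ (M *ᵥ v)) : 0 ≤ lamMin M := by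
  unfold lamMin
  exact Real.iInf_nonneg fun v => h v v.2

lemma dot_self_nonneg' {m : ℕ} (w : Fin m → ℝ) : 0 ≤ w ⬝ᵥ w := by
  have : (∑ j, w j ^ 2) = w ⬝ᵥ w := by simp [dotProduct, sq]
  rw [← this]
  exact Finset.sum_nonneg fun j _ => sq_nonneg _

lemma dot_self_pos' {m : ℕ} (w : Fin m → ℝ) (hw : w ≠ 0) : 0 < w ⬝ᵥ w := by
  have h2 : (∑ j, w j ^ 2) = w ⬝ᵥ w := by simp [dotProduct, sq]
  rw [← h2]
  apply Finset.sum_pos'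
  · exact fun j _ => sq_nonneg _
  · obtain ⟨i, hi⟩ := Function.ne_iff.mp hw
    exact ⟨i, Finset.mem_univ i, pow_two_pos_of_ne_zero hi⟩

/-- If `D⁻¹ + D⁻ᵀ` is positive definite and `ε > 0`, then `z ↦ (I + εD⁻¹)⁻¹ z` is
well-defined and a contraction with the stated explicit contraction factor. -/
theorem stmt11 {m : ℕ} (D : Matrix (Fin m) (Fin m) ℝ) (hDinv : IsUnit D.det)
    (hpd : ∀ w : Fin m → ℝ, w ≠ 0 → 0 < w ⬝ᵥ ((D⁻¹ + D⁻¹ᵀ) *ᵥ w))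
    (ε : ℝ) (hε : 0 < ε) :
    IsUnit (1 + ε • D⁻¹).det ∧
      ∀ z₁ z₂ : Fin m → ℝ,
        Real.sqrt (((1 + ε • D⁻¹)⁻¹ *ᵥ z₁ - (1 + ε • D⁻¹)⁻¹ *ᵥ z₂) ⬝ᵥ
            ((1 + ε • D⁻¹)⁻¹ *ᵥ z₁ - (1 + ε • D⁻¹)⁻¹ *ᵥ z₂)) ≤
          (1 + ε * lamMin (D⁻¹ + D⁻¹ᵀ) + ε ^ 2 * lamMin (D⁻¹ᵀ * D⁻¹)) ^ (-(1 : ℝ) / 2) *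
            Real.sqrt ((z₁ - z₂) ⬝ᵥ (z₁ - z₂)) := by
  set B := D⁻¹ with hB
  set A := (1 : Matrix (Fin m) (Fin m) ℝ) + ε • B with hA
  have htr : ∀ w : Fin m → ℝ, w ⬝ᵥ (Bᵀ *ᵥ w) = w ⬝ᵥ (B *ᵥ w) := by
    intro w
    rw [Matrix.mulVec_transpose, dotProduct_comm, ← Matrix.dotProduct_mulVec]
  have hBpos : ∀ w : Fin m → ℝ, w ≠ 0 → 0 < w ⬝ᵥ (B *ᵥ w) := by
    intro w hw
    have h := hpd w hw
    rw [Matrix.add_mulVec, dotProduct_add, htr] at h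
    linarith
  have hquadA : ∀ w : Fin m → ℝ, w ⬝ᵥ (A *ᵥ w) = w ⬝ᵥ w + ε * (w ⬝ᵥ (B *ᵥ w)) := by
    intro w
    rw [hA, Matrix.add_mulVec, Matrix.one_mulVec, dotProduct_add,
      Matrix.smul_mulVec, dotProduct_smul, smul_eq_mul]
  have hdet : IsUnit A.det := by
    rw [isUnit_iff_ne_zero]
    intro h0
    obtain ⟨w, hw, hAw⟩ := (Matrix.exists_mulVec_eq_zero_iff).mpr h0
    have h1 : w ⬝ᵥ (A *ᵥ w) = 0 := by rw [hAw, dotProduct_zero]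
    have h2 : 0 < w ⬝ᵥ (A *ᵥ w) := by
      rw [hquadA]
      have := hBpos w hw
      have := dot_self_pos' w hw
      nlinarith
    linarith
  refine ⟨hdet, ?_⟩
  set lam1 := lamMin (B + Bᵀ) with hl1
  set lam2 := lamMin (Bᵀ * B) with hl2
  set c := 1 + ε * lam1 + ε ^ 2 * lam2 with hc
  have hquad1 : ∀ w : Fin m → ℝ, w ⬝ᵥ ((B + Bᵀ) *ᵥ w) = 2 * (w ⬝ᵥ (B *ᵥ w)) := by
    intro w
    rw [Matrix.add_mulVec, dotProduct_add, htr]; ring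
  have hquad2 : ∀ w : Fin m → ℝ, w ⬝ᵥ ((Bᵀ * B) *ᵥ w) = (B *ᵥ w) ⬝ᵥ (B *ᵥ w) := by
    intro w
    rw [← Matrix.mulVec_mulVec, Matrix.mulVec_transpose, dotProduct_comm,
      ← Matrix.dotProduct_mulVec, dotProduct_comm]
  have hl1nn : 0 ≤ lam1 := by
    apply lamMin_nonneg
    intro v hv
    have hvne : v ≠ 0 := by
      intro h; rw [h] at hv; simp at hv
    have := hpd v hvne
    linarith
  have hl2nn : 0 ≤ lam2 := by
    apply lamMin_nonneg
    intro v hv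
    rw [hquad2]
    exact dot_self_nonneg' _
  have hc1 : (1:ℝ) ≤ c := by nlinarith
  have hc0 : 0 < c := by linarith
  have hkey : ∀ w : Fin m → ℝ, c * (w ⬝ᵥ w) ≤ (A *ᵥ w) ⬝ᵥ (A *ᵥ w) := by
    intro w
    have hexp : (A *ᵥ w) ⬝ᵥ (A *ᵥ w) =
        w ⬝ᵥ w + ε * (w ⬝ᵥ ((B + Bᵀ) *ᵥ w)) + ε ^ 2 * (w ⬝ᵥ ((Bᵀ * B) *ᵥ w)) := by
      have hAw : A *ᵥ w = w + ε • (B *ᵥ w) := by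
        rw [hA, Matrix.add_mulVec, Matrix.one_mulVec, Matrix.smul_mulVec]
      rw [hAw, hquad1, hquad2]
      simp only [dotProduct_add, add_dotProduct, dotProduct_smul,
        smul_dotProduct, smul_eq_mul]
      have hcomm : (B *ᵥ w) ⬝ᵥ w = w ⬝ᵥ (B *ᵥ w) := dotProduct_comm _ _
      rw [hcomm]; ring
    rw [hexp, hc]
    have h1 := lamMin_mul_le (B + Bᵀ) w
    have h2 := lamMin_mul_le (Bᵀ * B) w
    rw [← hl1] at h1
    rw [← hl2] at h2
    nlinarith
  intro z₁ z₂
  set u := z₁ - z₂ with hu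
  have hsub : A⁻¹ *ᵥ z₁ - A⁻¹ *ᵥ z₂ = A⁻¹ *ᵥ u := (Matrix.mulVec_sub _ _ _).symm
  rw [hsub]
  set wv := A⁻¹ *ᵥ u with hwv
  have hAw : A *ᵥ wv = u := by
    rw [hwv, Matrix.mulVec_mulVec, Matrix.mul_nonsing_inv _ hdet, Matrix.one_mulVec]
  have hkey2 : c * (wv ⬝ᵥ wv) ≤ u ⬝ᵥ u := by
    have := hkey wv
    rw [hAw] at this
    exact this
  have hcpow : c ^ (-(1:ℝ)/2) = (Real.sqrt c)⁻¹ := by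
    rw [neg_div, Real.rpow_neg hc0.le, ← Real.sqrt_eq_rpow]
  rw [hcpow, inv_mul_eq_div, le_div_iff₀ (Real.sqrt_pos.mpr hc0)]
  rw [← Real.sqrt_mul (dot_self_nonneg' wv) c]
  apply Real.sqrt_le_sqrt
  nlinarith [dot_self_nonneg' wv]
end

section
/- Let y_d ∈ ℝ^m, S = conv{0, y_d} = {λ y_d : λ ∈ [0,1]}, φ : ℝ^m → ℝ convex, D⁻¹ ∈ ℝ^{m×m}, and x ∈ ℝⁿ with C ∈ ℝ^{m×n}. If ⟨D⁻¹(y_d − Cx), y_d⟩ ≤ Dφ(y_d, −y_d), where Dφ(y_d, −y_d) = inf_{ρ>0} (φ(y_d − ρ y_d) − φ(y_d))/ρ is the directional derivative, then y = y_d solves the hemivariational inequality ⟨D⁻¹ y − D⁻¹Cx, σ − y⟩ + φ(σ) − φ(y) ≥ 0 for all σ ∈ S. -/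
open scoped Matrix

/-- If `⟨D⁻¹(y_d − Cx), y_d⟩ ≤ Dφ(y_d, −y_d)` (the directional derivative, expressed
as a lower bound over all difference quotients), then `y = y_d` solves the
hemivariational inequality on `S = conv{0, y_d}`. -/
theorem stmt15 {m n : ℕ} (yd : Fin m → ℝ)
    (φ : (Fin m → ℝ) → ℝ) (hφ : ConvexOn ℝ Set.univ φ)
    (Dinv : Matrix (Fin m) (Fin m) ℝ) (C : Matrix (Fin m) (Fin n) ℝ) (x : Fin n → ℝ)
    (hkey : ∀ ρ : ℝ, 0 < ρ →
      (Dinv *ᵥ (yd - C *ᵥ x)) ⬝ᵥ yd ≤ (φ (yd - ρ • yd) - φ yd) / ρ) :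
    ∀ σ ∈ {z : Fin m → ℝ | ∃ t : ℝ, 0 ≤ t ∧ t ≤ 1 ∧ z = t • yd},
      0 ≤ (Dinv *ᵥ yd - Dinv *ᵥ (C *ᵥ x)) ⬝ᵥ (σ - yd) + φ σ - φ yd := by
  rintro σ ⟨t, ht0, ht1, rfl⟩
  rcases eq_or_lt_of_le ht1 with h1 | h1
  · subst h1
    simp
  · set ρ := 1 - t with hρdef
    have hρ : 0 < ρ := by linarith
    have hσ : t • yd = yd - ρ • yd := by
      rw [hρdef, sub_smul, one_smul]; abel
    have h := (le_div_iff₀ hρ).mp (hkey ρ hρ)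
    have hV : Dinv *ᵥ yd - Dinv *ᵥ (C *ᵥ x) = Dinv *ᵥ (yd - C *ᵥ x) := by
      rw [Matrix.mulVec_sub]
    have hdot : (Dinv *ᵥ (yd - C *ᵥ x)) ⬝ᵥ (t • yd - yd)
        = -ρ * ((Dinv *ᵥ (yd - C *ᵥ x)) ⬝ᵥ yd) := by
      have : t • yd - yd = (-ρ) • yd := by
        rw [hρdef, neg_sub, sub_smul, one_smul]
      rw [this, dotProduct_smul, smul_eq_mul]
    rw [hV, hdot, hσ]
    linarith
end

section
/- Let y_d ∈ ℝ^m, S = {λ y_d : λ ∈ [0,1]}, φ : ℝ^m → ℝ convex, and let ū ∈ ℝ^m satisfy −⟨ū, y_d⟩ < Dφ(y_d, −y_d), where Dφ is the directional derivative. Then for every y = λ y_d with λ ∈ [0,1) and every u ∈ ∂(φ + ψ_S)(y), one has −⟨y − y_d, u − ū⟩ < 0. -/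
open scoped Matrix

/-- If `−⟨ū, y_d⟩ < Dφ(y_d, −y_d)` (strictly below the directional derivative, i.e.
below some lower bound `d` of all difference quotients), then for every
`y = λ y_d`, `λ ∈ [0,1)`, and every `u ∈ ∂(φ + ψ_S)(y)` with `S = conv{0, y_d}`,
the cross term `−⟨y − y_d, u − ū⟩` is strictly negative. -/
theorem stmt16 {m : ℕ} (yd ubar : Fin m → ℝ)
    (φ : (Fin m → ℝ) → ℝ) (hφ : ConvexOn ℝ Set.univ φ)
    (hbar : ∃ d : ℝ, (∀ ρ : ℝ, 0 < ρ → d ≤ (φ (yd - ρ • yd) - φ yd) / ρ) ∧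
      -(ubar ⬝ᵥ yd) < d) :
    ∀ t : ℝ, 0 ≤ t → t < 1 → ∀ u : Fin m → ℝ,
      (∀ σ ∈ {z : Fin m → ℝ | ∃ s : ℝ, 0 ≤ s ∧ s ≤ 1 ∧ z = s • yd},
        u ⬝ᵥ (σ - t • yd) ≤ φ σ - φ (t • yd)) →
      -((t • yd - yd) ⬝ᵥ (u - ubar)) < 0 := by
  obtain ⟨d, hd, hdlt⟩ := hbar
  intro t ht ht1 u hu
  have hpos : (0:ℝ) < 1 - t := by linarith
  have h1 := hu yd ⟨1, by norm_num, by norm_num, (one_smul ℝ yd).symm⟩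
  have h2 := hd (1 - t) hpos
  have e1 : yd - (1 - t) • yd = t • yd := by
    rw [sub_smul, one_smul]; abel
  rw [e1] at h2
  have hB : d * (1 - t) ≤ φ (t • yd) - φ yd := by
    rw [le_div_iff₀ hpos] at h2; linarith
  have e2 : yd - t • yd = (1 - t) • yd := by
    rw [sub_smul, one_smul]
  rw [e2, dotProduct_smul, smul_eq_mul] at h1
  have e3 : t • yd - yd = (t - 1) • yd := by
    rw [sub_smul, one_smul]
  rw [e3, smul_dotProduct, dotProduct_sub, smul_eq_mul,
    dotProduct_comm yd u, dotProduct_comm yd ubar]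
  nlinarith [mul_pos hpos (show (0:ℝ) < ubar ⬝ᵥ yd + d by linarith)]
end
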